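/- Let S = {d₁, ..., d_N} be real numbers and d a real number such that at least (2/3)·N of the dᵢ satisfy |dᵢ - d| < ε. For each j define r_j = inf{r > 0 : |{i : |d_i - d_j| ≤ r}| ≥ (2/3)·N}, and let j* minimize r_j. Then |d_{j*} - d| < 3ε. -/

import Mathlib

/-!
Let `G` be the set of accurate estimates and `q = 2N/3`. Any `j₀ ∈ G` captures all of `G`
within a radius `< 2ε`, so the minimal radius `r_{j*}` is `< 2ε` as well, and some ball around
`d_{j*}` of radius `< 2ε` captures `q` points. Two sets of more than half of the points meet,
so that ball contains an accurate estimate `d_i`, and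
`|d_{j*} - d| ≤ |d_{j*} - d_i| + |d_i - d| < 3ε`.
-/

open Finset

variable {ι : Type*} [Fintype ι]

/-- The paper's `r_j` is `sInf (captureRadii d q (d j))` with `q = 2N/3`. -/
def captureRadii (d : ι → ℝ) (q x : ℝ) : Set ℝ :=
  {ρ | 0 < ρ ∧ q ≤ #{i | |d i - x| ≤ ρ}}

lemma captureRadii_bddBelow (d : ι → ℝ) (q x : ℝ) : BddBelow (captureRadii d q x) :=
  ⟨0, fun _ hρ => hρ.1.le⟩

lemma mem_captureRadii_of_subset {d : ι → ℝ} {q x ρ : ℝ} {s : Finset ι} (hρ : 0 < ρ)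
    (hs : q ≤ #s) (hsρ : ∀ i ∈ s, |d i - x| ≤ ρ) : ρ ∈ captureRadii d q x :=
  ⟨hρ, hs.trans <| by
    exact_mod_cast card_le_card fun i hi => mem_filter.mpr ⟨mem_univ i, hsρ i hi⟩⟩

lemma captureRadii_nonempty (d : ι → ℝ) {q : ℝ} (hq : q ≤ Fintype.card ι) (x : ℝ) :
    (captureRadii d q x).Nonempty := by
  refine ⟨1 + ∑ i, |d i - x|, mem_captureRadii_of_subset (s := univ) ?_ hq fun i _ => ?_⟩
  · positivity
  · have := single_le_sum (fun k _ => abs_nonneg (d k - x)) (mem_univ i)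
    linarith

/-- The bound is strict because the finite cluster has a largest distance to `d j`. -/
lemma sInf_captureRadii_lt_two_mul {d : ι → ℝ} {q y ε : ℝ} {s : Finset ι} (hs : q ≤ #s)
    (hsε : ∀ i ∈ s, |d i - y| < ε) {j : ι} (hj : j ∈ s) :
    sInf (captureRadii d q (d j)) < 2 * ε := by
  have hε : 0 < ε := (abs_nonneg _).trans_lt (hsε j hj)
  set m := s.sup' ⟨j, hj⟩ fun i => |d i - d j|
  have hm : m < 2 * ε := by
    refine (sup'_lt_iff _).mpr fun i hi => ?_
    calc |d i - d j| ≤ |d i - y| + |y - d j| := abs_sub_le _ _ _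
      _ < 2 * ε := by linarith [hsε i hi, hsε j hj, abs_sub_comm y (d j)]
  have hmem : max m ε ∈ captureRadii d q (d j) :=
    mem_captureRadii_of_subset (hε.trans_le (le_max_right _ _)) hs
      fun i hi => (le_sup' (fun i => |d i - d j|) hi).trans (le_max_left _ _)
  exact (csInf_le (captureRadii_bddBelow _ _ _) hmem).trans_lt (max_lt hm (by linarith))

lemma inter_nonempty_of_card_lt_two_mul [DecidableEq ι] {s t : Finset ι} {q : ℝ}
    (hq : (Fintype.card ι : ℝ) < 2 * q) (hs : q ≤ #s) (ht : q ≤ #t) :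
    (s ∩ t).Nonempty := by
  refine inter_nonempty_of_card_lt_card_add_card (subset_univ s) (subset_univ t) ?_
  rw [card_univ]
  exact_mod_cast (show (Fintype.card ι : ℝ) < #s + #t by linarith)

theorem abs_sub_lt_three_mul_of_forall_sInf_captureRadii_le [DecidableEq ι] {d : ι → ℝ}
    {q y ε : ℝ} (hq : (Fintype.card ι : ℝ) < 2 * q) (hmaj : q ≤ #{i | |d i - y| < ε})
    {jstar : ι}
    (hjstar : ∀ j, sInf (captureRadii d q (d jstar)) ≤ sInf (captureRadii d q (d j))) :
    |d jstar - y| < 3 * ε := by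
  set G : Finset ι := {i | |d i - y| < ε}
  have hGε : ∀ i ∈ G, |d i - y| < ε := fun i hi => (mem_filter.mp hi).2
  have hqG : 0 < (#G : ℝ) := by linarith [(Nat.cast_nonneg _ : (0 : ℝ) ≤ Fintype.card ι)]
  obtain ⟨j₀, hj₀⟩ : G.Nonempty := card_pos.mp (by exact_mod_cast hqG)
  have hrstar : sInf (captureRadii d q (d jstar)) < 2 * ε :=
    (hjstar j₀).trans_lt (sInf_captureRadii_lt_two_mul hmaj hGε hj₀)
  have hqι : q ≤ Fintype.card ι := hmaj.trans (by exact_mod_cast card_le_univ G)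
  obtain ⟨ρ, ⟨-, hF⟩, hρ⟩ := exists_lt_of_csInf_lt (captureRadii_nonempty d hqι _) hrstar
  obtain ⟨i, hi⟩ := inter_nonempty_of_card_lt_two_mul hq hmaj hF
  have hiG := hGε i (mem_inter.mp hi).1
  have hiF : |d i - d jstar| ≤ ρ := (mem_filter.mp (mem_inter.mp hi).2).2
  calc |d jstar - y| ≤ |d jstar - d i| + |d i - y| := abs_sub_le _ _ _
    _ < 3 * ε := by linarith [abs_sub_comm (d jstar) (d i)]

theorem robust_ball_selection_general
    (N : ℕ) (d : Fin N → ℝ) (dtrue ε : ℝ)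
    (hmaj : (2/3 : ℝ) * N ≤ (Finset.univ.filter fun i => |d i - dtrue| < ε).card)
    (r : Fin N → ℝ)
    (hr : ∀ j, r j = sInf {ρ : ℝ | 0 < ρ ∧
      (2/3 : ℝ) * N ≤ (Finset.univ.filter fun i => |d i - d j| ≤ ρ).card})
    (jstar : Fin N) (hjstar : ∀ j, r jstar ≤ r j) :
    |d jstar - dtrue| < 3 * ε := by
  have hN : (0 : ℝ) < N := by exact_mod_cast jstar.pos
  refine abs_sub_lt_three_mul_of_forall_sInf_captureRadii_le (q := 2/3 * N) ?_ hmaj fun j => ?_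
  · rw [Fintype.card_fin]
    linarith
  · have h := hjstar j
    simp only [hr] at h
    exact h

/-- Robust aggregation: if at least `2/3` of the estimates `d i` are within `ε` of `d`,
then the estimate whose minimal-radius ball capturing `2/3` of the points has the
smallest radius is within `3ε` of `d`. -/
theorem robust_ball_selection
    (N : ℕ) (hN : 0 < N) (d : Fin N → ℝ) (dtrue ε : ℝ) (hε : 0 < ε)
    (hmaj : (2/3 : ℝ) * N ≤ (Finset.univ.filter fun i => |d i - dtrue| < ε).card)
    (r : Fin N → ℝ)
    (hr : ∀ j, r j = sInf {ρ : ℝ | 0 < ρ ∧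
      (2/3 : ℝ) * N ≤ (Finset.univ.filter fun i => |d i - d j| ≤ ρ).card})
    (jstar : Fin N) (hjstar : ∀ j, r jstar ≤ r j) :
    |d jstar - dtrue| < 3 * ε :=
  robust_ball_selection_general N d dtrue ε hmaj r hr jstar hjstar
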